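/- Let q be a prime power, F_q ⊆ F_{q^m}, x ∈ (F_{q^m})^n with pairwise distinct entries, y ∈ (F_{q^m})^n with all entries nonzero, t ≥ 2, and e = ⌊log_q(t−1)⌋ with e ≤ m−1. Let ev be the F_{q^m}-algebra homomorphism from F_{q^m}[X^{(u)}_a : 0 ≤ u ≤ m−1, 0 ≤ a ≤ t−1] to F_{q^m}^n (with componentwise multiplication) sending X^{(u)}_a to (y·x^a)^{q^u}, where products and powers of vectors are componentwise. Let Φ = (B_0^{(e)} | B_1^{(e−1)} | ⋯ | B_e^{(0)}) be the 2×f block matrix where B_u^{(e−u)} has first row (X^{(e−u)}_0, …, X^{(e−u)}_{t−1−q^u}) and second row (X^{(e−u)}_{q^u}, …, X^{(e−u)}_{t−1}). Then every 2×2 minor of Φ lies in ker(ev); equivalently, for all 0 ≤ u, v ≤ e, 0 ≤ a ≤ t−1−q^u, 0 ≤ b ≤ t−1−q^v, one has (y x^a)^{q^{e−u}} · (y x^{q^v+b})^{q^{e−v}} = (y x^{q^u+a})^{q^{e−u}} · (y x^b)^{q^{e−v}} in F_{q^m}^n. -/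
import Mathlib


/-- Every `2×2` minor of the matrix `Φ` lies in the kernel of
the evaluation map `X^{(u)}_a ↦ (y·x^a)^{q^u}`; equivalently, for all
`0 ≤ u, v ≤ e`, `0 ≤ a ≤ t−1−q^u`, `0 ≤ b ≤ t−1−q^v`, we have
`(yx^a)^{q^{e−u}} · (yx^{q^v+b})^{q^{e−v}} = (yx^{q^u+a})^{q^{e−u}} · (yx^b)^{q^{e−v}}`
in `F_{q^m}^n` (componentwise operations). -/
theorem syzygy_distinguisher_stmt4
    (Fq K : Type) [Field Fq] [Fintype Fq] [Field K] [Fintype K] [Algebra Fq K]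
    (q m n t e : ℕ) (hq : q = Fintype.card Fq) (hm : Module.finrank Fq K = m)
    (ht : 2 ≤ t) (he : e = Nat.log q (t - 1)) (hem : e ≤ m - 1)
    (x : Fin n → K) (hx : Function.Injective x)
    (y : Fin n → K) (hy : ∀ i, y i ≠ 0) :
    ∀ u v a b : ℕ, u ≤ e → v ≤ e → a + q ^ u ≤ t - 1 → b + q ^ v ≤ t - 1 →
      (y * x ^ a) ^ (q ^ (e - u)) * (y * x ^ (q ^ v + b)) ^ (q ^ (e - v))
        = (y * x ^ (q ^ u + a)) ^ (q ^ (e - u)) * (y * x ^ b) ^ (q ^ (e - v)) := by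
  intro u v a b hu hv ha hb
  have h1 : q ^ u * q ^ (e - u) = q ^ e := by rw [← pow_add, Nat.add_sub_cancel' hu]
  have h2 : q ^ v * q ^ (e - v) = q ^ e := by rw [← pow_add, Nat.add_sub_cancel' hv]
  simp only [mul_pow, ← pow_mul, add_mul, pow_add, h1, h2]
  ring
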